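/- (DDOT sample complexity.) Fix N qubits, a locality parameter k ≤ N, and a global reference string ỹ ∈ {0,1}^N. Let M = (M_x)_{x∈{0,1}^N} be a POVM on (ℂ²)^{⊗N}. Draw N_Mes i.i.d. strings y¹,…,y^{N_Mes} uniformly from {0,1}^N (computational basis inputs); given yⁱ, draw the outcome xⁱ ∈ {0,1}^N with probability tr(M_{xⁱ} |yⁱ⟩⟨yⁱ|). For a subset A of size k, strings x_A ∈ {0,1}^k and y_A = ỹ|_A, let h = #{i : yⁱ|_A = y_A} and, when h > 0, define M̂^A_{x_A,y_A} = (1/h)·#{i : yⁱ|_A = y_A and xⁱ|_A = x_A}. Then the probability that there exist a subset A of size k and x_A ∈ {0,1}^k with |M̂^A_{x_A,ỹ|_A} − M^A_{x_A,ỹ|_A}| ≥ ε is at most 2 · 2^k · C(N,k) · exp(−(1 − e^{−2ε²}) N_Mes / 2^k). In particular, N_Mes ≥ (2^k/(1 − e^{−2ε²}))·[(k+1)·log 2 + log C(N,k) + log(1/δ)] circuits suffice for accuracy ε with probability at least 1 − δ. -/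

import Mathlib

open scoped BigOperators ComplexOrder

/-- Restriction of a string on `N` qubits to a subset `A`. -/
def res {N : ℕ} {γ : Type*} (A : Finset (Fin N)) (x : Fin N → γ) : {j // j ∈ A} → γ :=
  fun j => x j.1

/-- Merge of a bit-string on a subset `A` with a bit-string on its complement. -/
def mer {N : ℕ} (A : Finset (Fin N)) (a : {j // j ∈ A} → Fin 2)
    (b : {j // j ∉ A} → Fin 2) : Fin N → Fin 2 :=
  fun j => if h : j ∈ A then a ⟨j, h⟩ else b ⟨j, h⟩

/-- The `N`-qubit computational basis state `|y⟩` for `y ∈ {0,1}^N`. -/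
noncomputable def cState {N : ℕ} (y : Fin N → Fin 2) : (Fin N → Fin 2) → ℂ :=
  fun x => if x = y then 1 else 0

/-- Born-rule probability `tr(M_x |y⟩⟨y|)` of outcome `x` on computational input `|y⟩`. -/
noncomputable def bornC {N : ℕ}
    (M : (Fin N → Fin 2) → Matrix (Fin N → Fin 2) (Fin N → Fin 2) ℂ)
    (y : Fin N → Fin 2) (x : Fin N → Fin 2) : ℝ :=
  (dotProduct (star (cState y)) ((M x).mulVec (cState y))).re

/-- The reduced POVM effect
`M^A_{x_A} = ∑_{x_Ā} tr_Ā (M_{x_A x_Ā} (1_A ⊗ 1_Ā / 2^(N-k)))` on the qubits of `A`. -/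
noncomputable def redEff {N : ℕ}
    (M : (Fin N → Fin 2) → Matrix (Fin N → Fin 2) (Fin N → Fin 2) ℂ)
    (A : Finset (Fin N)) (xA : {j // j ∈ A} → Fin 2) :
    Matrix ({j // j ∈ A} → Fin 2) ({j // j ∈ A} → Fin 2) ℂ :=
  Matrix.of fun a a' =>
    (1 / (2 : ℂ) ^ (N - A.card)) *
      ∑ xb : {j // j ∉ A} → Fin 2, ∑ b : {j // j ∉ A} → Fin 2,
        M (mer A xA xb) (mer A a b) (mer A a' b)

/-- The computational basis state `|y_A⟩` on the qubits of `A`. -/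
noncomputable def cStateA {N : ℕ} (A : Finset (Fin N)) (yA : {j // j ∈ A} → Fin 2) :
    ({j // j ∈ A} → Fin 2) → ℂ :=
  fun a => if a = yA then 1 else 0

/-- The reduced matrix element `M^A_{x_A,y_A} = tr(|x_A⟩⟨x_A| M^A(|y_A⟩⟨y_A|))`. -/
noncomputable def redElemC {N : ℕ}
    (M : (Fin N → Fin 2) → Matrix (Fin N → Fin 2) (Fin N → Fin 2) ℂ)
    (A : Finset (Fin N)) (xA : {j // j ∈ A} → Fin 2) (yA : {j // j ∈ A} → Fin 2) : ℝ :=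
  (dotProduct (star (cStateA A yA)) ((redEff M A xA).mulVec (cStateA A yA))).re

/-- The DDOT estimator `M̂^A_{x_A,y_A}`: the fraction, among the samples whose input string
restricted to `A` equals `y_A`, of those whose outcome restricted to `A` equals `x_A`. -/
noncomputable def estimC {N NMes : ℕ} (A : Finset (Fin N)) (xA : {j // j ∈ A} → Fin 2)
    (yA : {j // j ∈ A} → Fin 2)
    (ω : Fin NMes → (Fin N → Fin 2) × (Fin N → Fin 2)) : ℝ :=
  ((Finset.univ.filter fun i => res A (ω i).1 = yA ∧ res A (ω i).2 = xA).card : ℝ) /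
    ((Finset.univ.filter fun i => res A (ω i).1 = yA).card : ℝ)

/-- Probability weight of a sample sequence: each input string drawn uniformly from
`{0,1}^N`, each outcome drawn from the Born rule. -/
noncomputable def wgtC {N NMes : ℕ}
    (M : (Fin N → Fin 2) → Matrix (Fin N → Fin 2) (Fin N → Fin 2) ℂ)
    (ω : Fin NMes → (Fin N → Fin 2) × (Fin N → Fin 2)) : ℝ :=
  ∏ i, (1 / (2 : ℝ) ^ N) * bornC M (ω i).1 (ω i).2

open scoped Classical in
/-- Probability that for some subset `A` of size `k` and some outcome `x_A` the DDOT
estimator deviates from the reduced matrix element by at least `ε`. -/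
noncomputable def badProbC (N k NMes : ℕ)
    (M : (Fin N → Fin 2) → Matrix (Fin N → Fin 2) (Fin N → Fin 2) ℂ)
    (ytilde : Fin N → Fin 2) (ε : ℝ) : ℝ :=
  ∑ ω ∈ Finset.univ.filter
      (fun ω : Fin NMes → (Fin N → Fin 2) × (Fin N → Fin 2) =>
        ∃ A : Finset (Fin N), A.card = k ∧ ∃ xA : {j // j ∈ A} → Fin 2,
          |estimC A xA (res A ytilde) ω - redElemC M A xA (res A ytilde)| ≥ ε),
    wgtC M ω

/-!
Each sample `(yⁱ, xⁱ)` is an independent draw from `P (y, x) = 2⁻ᴺ tr (M_x |y⟩⟨y|)`. For fixed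
`A` and `x_A`, a sample hits `y_A = ỹ|_A` with probability `2⁻ᵏ`, and hits it with `x|_A = x_A`
with probability `2⁻ᵏ M^A_{x_A,y_A}`: averaging the input uniformly over the complement of `A`
is exactly the partial trace against `1_Ā / 2^(N-k)`. The estimator deviates by `ε` only if one
of the sums `∑ᵢ (1[hit ∧ match] - (q ± ε) 1[hit])` has the wrong sign. Chernoff's bound at
`t = 4ε`, with Hoeffding's lemma for the Bernoulli(`q`) match indicator, bounds each tail by
`(1 - 2⁻ᵏ (1 - e^{-2ε²}))^N_Mes ≤ exp (-(1 - e^{-2ε²}) N_Mes / 2ᵏ)`. A union bound over the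
`C(N,k) 2ᵏ` pairs `(A, x_A)` gives the first claim; the second is that bound solved for `N_Mes`.
-/

open Real Finset

open MeasureTheory ProbabilityTheory in
lemma bernoulli_mgf_le {q : ℝ} (hq0 : 0 ≤ q) (hq1 : q ≤ 1) (t : ℝ) :
    q * exp (t * (1 - q)) + (1 - q) * exp (-(t * q)) ≤ exp (t ^ 2 / 8) := by
  let μ : Measure Bool := Ber(true, false, ⟨q, hq0, hq1⟩)
  let X : Bool → ℝ := fun b => if b then 1 else 0
  have hX : ∀ b, X b ∈ Set.Icc 0 1 := fun b => by cases b <;> simp [X]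
  have hmean : μ[X] = q := by simp [μ, X, integral_bernoulliMeasure]
  have hoeff := (hasSubgaussianMGF_of_mem_Icc (μ := μ) .of_discrete (ae_of_all _ hX)).mgf_le t
  rw [hmean] at hoeff
  convert hoeff using 1
  · simp [mgf, μ, X, integral_bernoulliMeasure]
  · congr 1
    norm_num
    ring

lemma sum_union_le_of_nonneg {α : Type*} [DecidableEq α] {s t : Finset α} {w : α → ℝ}
    (hw : ∀ a, 0 ≤ w a) : ∑ a ∈ s ∪ t, w a ≤ ∑ a ∈ s, w a + ∑ a ∈ t, w a := by
  rw [← sum_union_inter]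
  exact le_add_of_nonneg_right (sum_nonneg fun a _ => hw a)

lemma sum_biUnion_le_of_nonneg {ι α : Type*} [DecidableEq α] (s : Finset ι) (t : ι → Finset α)
    {w : α → ℝ} (hw : ∀ a, 0 ≤ w a) : ∑ a ∈ s.biUnion t, w a ≤ ∑ i ∈ s, ∑ a ∈ t i, w a := by
  rw [← sup_eq_biUnion]
  exact apply_sup_le_sum (f := fun u => ∑ a ∈ u, w a) sum_empty (sum_union_le_of_nonneg hw) s

lemma dotProduct_single_mulVec_single {S : Type*} [Fintype S] [DecidableEq S]
    (B : Matrix S S ℂ) (y : S) :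
    dotProduct (star fun x : S => if x = y then (1 : ℂ) else 0)
        (B.mulVec fun x => if x = y then 1 else 0) =
      B y y := by
  simp [dotProduct, Matrix.mulVec, apply_ite, mul_comm]

/-- With no hit (`h = 0`) the frequency is `0 / 0 = 0`, and the upper alternative holds. -/
lemma tail_cases_of_le_abs_div_sub {m h : ℕ} (hmh : m ≤ h) {q ε : ℝ}
    (hdev : ε ≤ |(m : ℝ) / h - q|) :
    (q + ε) * h ≤ m ∨ (1 - q + ε) * h ≤ ((h - m : ℕ) : ℝ) := by
  rcases Nat.eq_zero_or_pos h with rfl | hpos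
  · simp
  have hh : (0 : ℝ) < h := by exact_mod_cast hpos
  push_cast [hmh]
  rcases le_abs'.mp hdev with hlow | hup
  · right
    have := (div_le_iff₀ hh).mp (by linarith : (m : ℝ) / h ≤ q - ε)
    linarith
  · left
    have := (le_div_iff₀ hh).mp (by linarith : q + ε ≤ (m : ℝ) / h)
    linarith

section IndependentSamples

variable {Ω : Type*} [Fintype Ω] {P : Ω → ℝ}

lemma sum_prod_filter_sum_nonneg_le_pow (hP : ∀ s, 0 ≤ P s) (Z : Ω → ℝ) {t : ℝ} (ht : 0 ≤ t)
    (n : ℕ) :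
    ∑ ω ∈ univ.filter (fun ω : Fin n → Ω => 0 ≤ ∑ i, Z (ω i)), ∏ i, P (ω i) ≤
      (∑ s, P s * exp (t * Z s)) ^ n := by
  have hprod : ∀ ω : Fin n → Ω, 0 ≤ ∏ i, P (ω i) * exp (t * Z (ω i)) :=
    fun ω => prod_nonneg fun i _ => mul_nonneg (hP _) (exp_pos _).le
  rw [Fintype.sum_pow]
  calc _ ≤ ∑ ω ∈ univ.filter (fun ω : Fin n → Ω => 0 ≤ ∑ i, Z (ω i)),
        ∏ i, P (ω i) * exp (t * Z (ω i)) := by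
        refine sum_le_sum fun ω hω => ?_
        rw [prod_mul_distrib, ← exp_sum, ← mul_sum]
        exact le_mul_of_one_le_right (prod_nonneg fun i _ => hP _)
          (one_le_exp (mul_nonneg ht (mem_filter.mp hω).2))
    _ ≤ _ := sum_le_sum_of_subset_of_nonneg (filter_subset _ _) fun ω _ _ => hprod ω

variable {hit mat : Ω → Prop} [DecidablePred hit] [DecidablePred mat] {p q : ℝ}

/-- At `t = 4ε`, Hoeffding's factor `exp (t ^ 2 / 8 - t * ε)` is exactly `exp (-2 * ε ^ 2)`. -/
lemma sum_mul_exp_hit_match_le (hP1 : ∑ s, P s = 1) (hp : ∑ s ∈ univ.filter hit, P s = p)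
    (hq : ∑ s ∈ univ.filter (fun s => hit s ∧ mat s), P s = p * q) (hp0 : 0 ≤ p)
    (hq0 : 0 ≤ q) (hq1 : q ≤ 1) (ε : ℝ) :
    ∑ s, P s * exp (4 * ε *
        ((if hit s ∧ mat s then 1 else 0) - (q + ε) * (if hit s then 1 else 0))) ≤
      exp (-(p * (1 - exp (-2 * ε ^ 2)))) := by
  set a := 4 * ε * (1 - (q + ε))
  set b := 4 * ε * -(q + ε)
  have hsplit : ∀ s, exp (4 * ε *
      ((if hit s ∧ mat s then 1 else 0) - (q + ε) * (if hit s then 1 else 0))) =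
      1 + (if hit s then exp b - 1 else 0) + (if hit s ∧ mat s then exp a - exp b else 0) := by
    intro s
    by_cases h₁ : hit s <;> by_cases h₂ : mat s
    all_goals simp [h₁, h₂, a, b]
    ring
  have hmix : q * exp a + (1 - q) * exp b ≤ exp (-2 * ε ^ 2) :=
    calc q * exp a + (1 - q) * exp b
        = (q * exp (4 * ε * (1 - q)) + (1 - q) * exp (-(4 * ε * q))) * exp (-(4 * ε * ε)) := by
          simp only [a, b, add_mul, mul_assoc, ← exp_add]
          ring_nf
      _ ≤ exp ((4 * ε) ^ 2 / 8) * exp (-(4 * ε * ε)) := by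
          gcongr
          exact bernoulli_mgf_le hq0 hq1 _
      _ = exp (-2 * ε ^ 2) := by
          rw [← exp_add]
          ring_nf
  calc _ = 1 - p + p * (q * exp a + (1 - q) * exp b) := by
        simp only [hsplit, mul_add, mul_one, sum_add_distrib, hP1]
        simp only [mul_ite, mul_zero, ← sum_filter, ← sum_mul, hp, hq]
        ring
    _ ≤ 1 - p * (1 - exp (-2 * ε ^ 2)) := by nlinarith
    _ ≤ _ := by linarith [add_one_le_exp (-(p * (1 - exp (-2 * ε ^ 2))))]

lemma sum_prod_filter_upper_tail_le (hP : ∀ s, 0 ≤ P s) (hP1 : ∑ s, P s = 1)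
    (hp : ∑ s ∈ univ.filter hit, P s = p)
    (hq : ∑ s ∈ univ.filter (fun s => hit s ∧ mat s), P s = p * q) (hp0 : 0 ≤ p)
    (hq0 : 0 ≤ q) (hq1 : q ≤ 1) {ε : ℝ} (hε : 0 ≤ ε) (n : ℕ) :
    ∑ ω ∈ univ.filter (fun ω : Fin n → Ω =>
        (q + ε) * #{i | hit (ω i)} ≤ (#{i | hit (ω i) ∧ mat (ω i)} : ℝ)), ∏ i, P (ω i) ≤
      exp (-(p * (1 - exp (-2 * ε ^ 2)) * n)) := by
  set Z : Ω → ℝ := fun s => (if hit s ∧ mat s then 1 else 0) - (q + ε) * (if hit s then 1 else 0)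
  have hZ : ∀ ω : Fin n → Ω,
      ∑ i, Z (ω i) = #{i | hit (ω i) ∧ mat (ω i)} - (q + ε) * #{i | hit (ω i)} := by
    intro ω
    simp only [Z, sum_sub_distrib, ← mul_sum, sum_boole]
  calc _ = ∑ ω ∈ univ.filter (fun ω : Fin n → Ω => 0 ≤ ∑ i, Z (ω i)), ∏ i, P (ω i) := by
        simp only [hZ, sub_nonneg]
    _ ≤ (∑ s, P s * exp (4 * ε * Z s)) ^ n :=
        sum_prod_filter_sum_nonneg_le_pow hP Z (by positivity) n
    _ ≤ exp (-(p * (1 - exp (-2 * ε ^ 2)))) ^ n :=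
        pow_le_pow_left₀ (sum_nonneg fun s _ => mul_nonneg (hP s) (exp_pos _).le)
          (sum_mul_exp_hit_match_le hP1 hp hq hp0 hq0 hq1 ε) n
    _ = _ := by
        rw [← exp_nat_mul]
        ring_nf

lemma sum_prod_filter_deviation_le (hP : ∀ s, 0 ≤ P s) (hP1 : ∑ s, P s = 1)
    (hp : ∑ s ∈ univ.filter hit, P s = p)
    (hq : ∑ s ∈ univ.filter (fun s => hit s ∧ mat s), P s = p * q) (hp0 : 0 ≤ p)
    (hq0 : 0 ≤ q) (hq1 : q ≤ 1) {ε : ℝ} (hε : 0 ≤ ε) (n : ℕ) :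
    ∑ ω ∈ univ.filter (fun ω : Fin n → Ω =>
        ε ≤ |(#{i | hit (ω i) ∧ mat (ω i)} : ℝ) / #{i | hit (ω i)} - q|), ∏ i, P (ω i) ≤
      2 * exp (-(p * (1 - exp (-2 * ε ^ 2)) * n)) := by
  classical
  have hq' : ∑ s ∈ univ.filter (fun s => hit s ∧ ¬mat s), P s = p * (1 - q) := by
    have := sum_filter_add_sum_filter_not (univ.filter hit) mat P
    rw [filter_filter, filter_filter, hp, hq] at this
    linarith
  have hcard : ∀ ω : Fin n → Ω,
      #{i | hit (ω i) ∧ ¬mat (ω i)} = #{i | hit (ω i)} - #{i | hit (ω i) ∧ mat (ω i)} := by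
    intro ω
    have := card_filter_add_card_filter_not (s := univ.filter fun i => hit (ω i))
      (fun i => mat (ω i))
    rw [filter_filter, filter_filter] at this
    omega
  have hsub : univ.filter (fun ω : Fin n → Ω =>
        ε ≤ |(#{i | hit (ω i) ∧ mat (ω i)} : ℝ) / #{i | hit (ω i)} - q|) ⊆
      univ.filter (fun ω : Fin n → Ω =>
        (q + ε) * #{i | hit (ω i)} ≤ (#{i | hit (ω i) ∧ mat (ω i)} : ℝ)) ∪
      univ.filter (fun ω : Fin n → Ω =>
        (1 - q + ε) * #{i | hit (ω i)} ≤ (#{i | hit (ω i) ∧ ¬mat (ω i)} : ℝ)) := by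
    intro ω hω
    simp only [mem_union, mem_filter, mem_univ, true_and, hcard] at hω ⊢
    exact tail_cases_of_le_abs_div_sub
      (card_le_card (monotone_filter_right _ fun _ _ => And.left)) hω
  calc _ ≤ _ := sum_le_sum_of_subset_of_nonneg hsub fun ω _ _ => prod_nonneg fun i _ => hP _
    _ ≤ _ := sum_union_le_of_nonneg fun ω => prod_nonneg fun i _ => hP _
    _ ≤ _ := add_le_add (sum_prod_filter_upper_tail_le hP hP1 hp hq hp0 hq0 hq1 hε n)
        (sum_prod_filter_upper_tail_le hP hP1 hp hq' hp0 (by linarith) (by linarith) hε n)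
    _ = _ := by ring

end IndependentSamples

lemma two_mul_two_pow_mul_exp_le {k : ℕ} {m a n δ : ℝ} (hm : 0 ≤ m) (ha : 0 < a) (hδ : 0 < δ)
    (hn : n ≥ 2 ^ k / a * ((k + 1) * log 2 + log m + log (1 / δ))) :
    2 * 2 ^ k * m * exp (-a * n / 2 ^ k) ≤ δ := by
  rcases hm.eq_or_lt with rfl | hm
  · simpa using hδ.le
  have hL : (k + 1) * log 2 + log m + log (1 / δ) ≤ a * n / 2 ^ k := by
    rw [ge_iff_le, div_mul_eq_mul_div, div_le_iff₀ ha] at hn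
    rw [le_div_iff₀ (by positivity)]
    linarith
  calc 2 * 2 ^ k * m * exp (-a * n / 2 ^ k)
      = exp ((k + 1 : ℕ) * log 2 + log m - a * n / 2 ^ k) := by
        rw [exp_sub, exp_add, exp_nat_mul, exp_log two_pos, exp_log hm, neg_mul, neg_div, exp_neg]
        ring
    _ ≤ exp (-log (1 / δ)) := exp_le_exp.mpr (by push_cast; linarith)
    _ = δ := by rw [one_div, log_inv, neg_neg, exp_log hδ]

def subsetOutcomePairs (N k : ℕ) : Finset (Σ A : Finset (Fin N), {j // j ∈ A} → Fin 2) :=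
  (powersetCard k univ).sigma fun _ => univ

section Sampling

variable {N : ℕ}

lemma res_mer (A : Finset (Fin N)) (a : {j // j ∈ A} → Fin 2) (b : {j // j ∉ A} → Fin 2) :
    res A (mer A a b) = a := by
  funext j
  simp [res, mer, j.2]

lemma sum_filter_res_eq {β : Type*} [AddCommMonoid β] (A : Finset (Fin N))
    (yA : {j // j ∈ A} → Fin 2) (f : (Fin N → Fin 2) → β) :
    ∑ y ∈ univ.filter (fun y => res A y = yA), f y =
      ∑ b : {j // j ∉ A} → Fin 2, f (mer A yA b) := by
  rw [sum_filter, ← (Equiv.piEquivPiSubtypeProd (· ∈ A) fun _ => Fin 2).symm.sum_comp,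
    Fintype.sum_prod_type]
  change ∑ a, ∑ b, (if res A (mer A a b) = yA then f (mer A a b) else 0) = _
  simp only [res_mer, sum_ite_irrel, sum_const_zero, Fintype.sum_ite_eq']

variable (M : (Fin N → Fin 2) → Matrix (Fin N → Fin 2) (Fin N → Fin 2) ℂ)

lemma bornC_eq (y x : Fin N → Fin 2) : bornC M y x = (M x y y).re := by
  unfold bornC cState
  rw [dotProduct_single_mulVec_single]

lemma bornC_nonneg (hpsd : ∀ x, (M x).PosSemidef) (y x : Fin N → Fin 2) : 0 ≤ bornC M y x :=
  (Complex.le_def.mp ((hpsd x).dotProduct_mulVec_nonneg (cState y))).1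

lemma sum_bornC (hsum : ∑ x, M x = 1) (y : Fin N → Fin 2) : ∑ x, bornC M y x = 1 := by
  simp only [bornC_eq, ← Complex.re_sum, ← Matrix.sum_apply, hsum, Matrix.one_apply_eq,
    Complex.one_re]

lemma redElemC_eq (A : Finset (Fin N)) (xA yA : {j // j ∈ A} → Fin 2) :
    redElemC M A xA yA = (2 ^ (N - #A))⁻¹ *
      ∑ xb : {j // j ∉ A} → Fin 2, ∑ b : {j // j ∉ A} → Fin 2,
        (M (mer A xA xb) (mer A yA b) (mer A yA b)).re := by
  unfold redElemC cStateA
  rw [dotProduct_single_mulVec_single, redEff, Matrix.of_apply, one_div,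
    show ((2 : ℂ) ^ (N - #A))⁻¹ = ((2 ^ (N - #A))⁻¹ : ℝ) by push_cast; rfl,
    Complex.re_ofReal_mul]
  simp only [Complex.re_sum]

noncomputable def sampleProb (s : (Fin N → Fin 2) × (Fin N → Fin 2)) : ℝ :=
  1 / 2 ^ N * bornC M s.1 s.2

lemma sampleProb_nonneg (hpsd : ∀ x, (M x).PosSemidef) (s : (Fin N → Fin 2) × (Fin N → Fin 2)) :
    0 ≤ sampleProb M s :=
  mul_nonneg (by positivity) (bornC_nonneg M hpsd _ _)

lemma sum_sampleProb_fst (hsum : ∑ x, M x = 1) (y : Fin N → Fin 2) :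
    ∑ x, sampleProb M (y, x) = 1 / 2 ^ N := by
  simp only [sampleProb, ← mul_sum, sum_bornC M hsum, mul_one]

lemma sum_sampleProb (hsum : ∑ x, M x = 1) : ∑ s, sampleProb M s = 1 := by
  simp [Fintype.sum_prod_type, sum_sampleProb_fst M hsum]

lemma one_div_two_pow_eq (A : Finset (Fin N)) :
    (1 / 2 ^ N : ℝ) = (2 ^ #A)⁻¹ * (2 ^ (N - #A))⁻¹ := by
  have hA : #A ≤ N := card_le_univ A |>.trans_eq (Fintype.card_fin N)
  rw [one_div, ← mul_inv, ← pow_add, Nat.add_sub_cancel' hA]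

lemma card_compl_fun (A : Finset (Fin N)) :
    Fintype.card ({j // j ∉ A} → Fin 2) = 2 ^ (N - #A) := by
  simp [Fintype.card_subtype_compl]

lemma sum_sampleProb_filter_fst (hsum : ∑ x, M x = 1) (A : Finset (Fin N))
    (yA : {j // j ∈ A} → Fin 2) :
    ∑ s ∈ univ.filter (fun s : (Fin N → Fin 2) × (Fin N → Fin 2) => res A s.1 = yA),
      sampleProb M s = (2 ^ #A)⁻¹ := by
  have hprod : univ.filter (fun s : (Fin N → Fin 2) × (Fin N → Fin 2) => res A s.1 = yA) =
      univ.filter (fun y => res A y = yA) ×ˢ univ := by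
    ext; simp
  rw [hprod, sum_product, sum_filter_res_eq A yA fun y => ∑ x, sampleProb M (y, x)]
  simp only [sum_sampleProb_fst M hsum, sum_const, card_univ, card_compl_fun,
    one_div_two_pow_eq A, nsmul_eq_mul]
  push_cast
  field_simp

lemma sum_sampleProb_filter_fst_snd (A : Finset (Fin N)) (xA yA : {j // j ∈ A} → Fin 2) :
    ∑ s ∈ univ.filter
        (fun s : (Fin N → Fin 2) × (Fin N → Fin 2) => res A s.1 = yA ∧ res A s.2 = xA),
      sampleProb M s = (2 ^ #A)⁻¹ * redElemC M A xA yA := by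
  have hprod : univ.filter
      (fun s : (Fin N → Fin 2) × (Fin N → Fin 2) => res A s.1 = yA ∧ res A s.2 = xA) =
      univ.filter (fun y => res A y = yA) ×ˢ univ.filter (fun x => res A x = xA) := by
    ext; simp
  rw [hprod, sum_product, redElemC_eq, ← mul_assoc, ← one_div_two_pow_eq, mul_sum, sum_comm]
  simp only [sum_filter_res_eq, sampleProb, bornC_eq, mul_sum]

lemma sum_wgtC_filter_deviation_le (hpsd : ∀ x, (M x).PosSemidef) (hsum : ∑ x, M x = 1)
    (A : Finset (Fin N)) (xA yA : {j // j ∈ A} → Fin 2) {ε : ℝ} (hε : 0 ≤ ε) (n : ℕ) :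
    ∑ ω ∈ univ.filter (fun ω : Fin n → (Fin N → Fin 2) × (Fin N → Fin 2) =>
        ε ≤ |estimC A xA yA ω - redElemC M A xA yA|), wgtC M ω ≤
      2 * exp (-((2 ^ #A)⁻¹ * (1 - exp (-2 * ε ^ 2)) * n)) := by
  have hP := sampleProb_nonneg M hpsd
  have hp := sum_sampleProb_filter_fst M hsum A yA
  have hq := sum_sampleProb_filter_fst_snd M A xA yA
  have hp0 : (0 : ℝ) < (2 ^ #A)⁻¹ := by positivity
  have hq0 : 0 ≤ redElemC M A xA yA :=
    nonneg_of_mul_nonneg_right (hq ▸ sum_nonneg fun s _ => hP s) hp0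
  have hq1 : redElemC M A xA yA ≤ 1 := by
    refine le_of_mul_le_mul_left ?_ hp0
    rw [mul_one, ← hq, ← hp]
    exact sum_le_sum_of_subset_of_nonneg (monotone_filter_right _ fun _ _ => And.left)
      fun s _ _ => hP s
  exact sum_prod_filter_deviation_le hP (sum_sampleProb M hsum) hp hq hp0.le hq0 hq1 hε n

variable {k : ℕ}

lemma card_subsetOutcomePairs : #(subsetOutcomePairs N k) = N.choose k * 2 ^ k := by
  rw [subsetOutcomePairs, card_sigma, sum_congr rfl fun A hA => ?_, sum_const, card_powersetCard,
    card_univ, Fintype.card_fin, smul_eq_mul]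
  simp [mem_powersetCard_univ.mp hA]

lemma badProbC_le_sum_subsetOutcomePairs (hpsd : ∀ x, (M x).PosSemidef) (NMes : ℕ)
    (ytilde : Fin N → Fin 2) (ε : ℝ) :
    badProbC N k NMes M ytilde ε ≤ ∑ a ∈ subsetOutcomePairs N k,
      ∑ ω ∈ univ.filter (fun ω : Fin NMes → (Fin N → Fin 2) × (Fin N → Fin 2) =>
        ε ≤ |estimC a.1 a.2 (res a.1 ytilde) ω - redElemC M a.1 a.2 (res a.1 ytilde)|),
        wgtC M ω := by
  refine le_of_eq_of_le ?_ (sum_biUnion_le_of_nonneg _ _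
    fun ω => prod_nonneg fun i _ => sampleProb_nonneg M hpsd (ω i))
  unfold badProbC
  congr 1
  ext ω
  simp [subsetOutcomePairs]

lemma badProbC_le (hpsd : ∀ x, (M x).PosSemidef) (hsum : ∑ x, M x = 1) (NMes : ℕ)
    (ytilde : Fin N → Fin 2) {ε : ℝ} (hε : 0 ≤ ε) :
    badProbC N k NMes M ytilde ε ≤
      2 * 2 ^ k * (N.choose k : ℝ) * exp (-(1 - exp (-2 * ε ^ 2)) * NMes / 2 ^ k) :=
  calc badProbC N k NMes M ytilde ε
      ≤ ∑ _a ∈ subsetOutcomePairs N k, 2 * exp (-(1 - exp (-2 * ε ^ 2)) * NMes / 2 ^ k) := by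
        refine (badProbC_le_sum_subsetOutcomePairs M hpsd NMes ytilde ε).trans
          (sum_le_sum fun a ha => ?_)
        obtain rfl : #a.1 = k := mem_powersetCard_univ.mp (mem_sigma.mp ha).1
        refine (sum_wgtC_filter_deviation_le M hpsd hsum a.1 a.2 _ hε NMes).trans_eq ?_
        ring_nf
    _ = _ := by
        rw [sum_const, card_subsetOutcomePairs, nsmul_eq_mul]
        push_cast
        ring

end Sampling

theorem ddot_sample_complexity_general (N k NMes : ℕ)
    (M : (Fin N → Fin 2) → Matrix (Fin N → Fin 2) (Fin N → Fin 2) ℂ)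
    (hpsd : ∀ x, (M x).PosSemidef) (hsum : ∑ x, M x = 1)
    (ytilde : Fin N → Fin 2) (ε : ℝ) (hε : 0 < ε) :
    badProbC N k NMes M ytilde ε ≤
        2 * 2 ^ k * (N.choose k : ℝ) *
          Real.exp (-(1 - Real.exp (-2 * ε ^ 2)) * NMes / 2 ^ k) ∧
      ∀ δ : ℝ, 0 < δ →
        (NMes : ℝ) ≥ ((2 : ℝ) ^ k / (1 - Real.exp (-2 * ε ^ 2))) *
            (((k : ℝ) + 1) * Real.log 2 + Real.log (N.choose k : ℝ) + Real.log (1 / δ)) →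
        badProbC N k NMes M ytilde ε ≤ δ := by
  have hbound := badProbC_le M hpsd hsum NMes ytilde hε.le (k := k)
  have hc : 0 < 1 - exp (-2 * ε ^ 2) := by
    linarith [exp_lt_one_iff.mpr (by nlinarith : -2 * ε ^ 2 < 0)]
  exact ⟨hbound, fun δ hδ hn =>
    hbound.trans (two_mul_two_pow_mul_exp_le (by positivity) hc hδ hn)⟩

/-- DDOT sample complexity: for a POVM `M` on `N` qubits, inputs drawn
uniformly i.i.d. from `{0,1}^N` and Born-rule outcomes, the probability that for some
subset `A` of size `k` and some `x_A` the estimator deviates by `≥ ε` is at most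
`2 · 2^k · C(N,k) · exp(−(1 − e^{−2ε²}) N_Mes / 2^k)`; consequently
`N_Mes ≥ (2^k/(1 − e^{−2ε²}))[(k+1)log 2 + log C(N,k) + log(1/δ)]` circuits suffice for
accuracy `ε` with probability `≥ 1 − δ`. -/
theorem ddot_sample_complexity (N k NMes : ℕ) (hk : k ≤ N)
    (M : (Fin N → Fin 2) → Matrix (Fin N → Fin 2) (Fin N → Fin 2) ℂ)
    (hpsd : ∀ x, (M x).PosSemidef) (hsum : ∑ x, M x = 1)
    (ytilde : Fin N → Fin 2) (ε : ℝ) (hε : 0 < ε) :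
    badProbC N k NMes M ytilde ε ≤
        2 * 2 ^ k * (N.choose k : ℝ) *
          Real.exp (-(1 - Real.exp (-2 * ε ^ 2)) * NMes / 2 ^ k) ∧
      ∀ δ : ℝ, 0 < δ →
        (NMes : ℝ) ≥ ((2 : ℝ) ^ k / (1 - Real.exp (-2 * ε ^ 2))) *
            (((k : ℝ) + 1) * Real.log 2 + Real.log (N.choose k : ℝ) + Real.log (1 / δ)) →
        badProbC N k NMes M ytilde ε ≤ δ :=
  ddot_sample_complexity_general N k NMes M hpsd hsum ytilde ε hε
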